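/- For 0 < q < 1, t₁, t₂ ∈ (−1,1) with t₁ ≠ 0, θ ∈ ℝ, and t ∈ ℂ with |t| < 1, the Al-Salam–Chihara polynomials p_n(x; t₁, t₂) satisfy the generating function Σ_{n=0}^∞ (t₁t₂;q)_n p_n(cos θ; t₁,t₂) (t/t₁)^n / (q;q)_n = (tt₁, tt₂; q)_∞ / (te^{iθ}, te^{−iθ}; q)_∞. -/

import Mathlib

open MeasureTheory Complex Filter Finset

/-- The finite q-shifted factorial `(a;q)_n`. -/
noncomputable def qp (q a : ℂ) (n : ℕ) : ℂ := ∏ k ∈ Finset.range n, (1 - a * q ^ k)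

/-- The infinite q-shifted factorial `(a;q)_∞`. -/
noncomputable def qpi (q a : ℂ) : ℂ := ∏' k : ℕ, (1 - a * q ^ k)

/-- The Al-Salam--Chihara polynomial `p_n(cos θ; t₁, t₂)`, as a function of `θ`. -/
noncomputable def ascP (q t₁ t₂ : ℂ) (n : ℕ) (θ : ℝ) : ℂ :=
  ∑ k ∈ Finset.range (n + 1),
    qp q (q ^ (-(n : ℤ))) k * qp q (t₁ * Complex.exp (θ * Complex.I)) k *
      qp q (t₁ * Complex.exp (-(θ * Complex.I))) k * q ^ k /
    (qp q q k * qp q (t₁ * t₂) k)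

/-!
Write `u = e^{iθ}`. By the `q`-binomial theorem `(t t₁; q)_∞ / (t u; q)_∞` and
`(t t₂; q)_∞ / (t u⁻¹; q)_∞` are the `q`-binomial series of `(t₁ u⁻¹; q)_n` at `t u` and of
`(t₂ u; q)_n` at `t u⁻¹`, so the generating function is their Cauchy product. What remains is a
polynomial identity in `s = t₂` between the Cauchy coefficient and `(t₁ s; q)_n p_n`: both sides
satisfy the contiguity relation `F_{n+1}(s) - F_{n+1}(q s) = -s F_n(q s)`, and they agree at
`s = u⁻¹` by a terminating `q`-Chu–Vandermonde sum. By induction on `n` their difference is then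
continuous and invariant under `s ↦ q s`, hence constant, hence zero.
-/

open Topology

section QShiftedFactorial

variable (q : ℂ)

@[simp]
lemma qp_zero (a : ℂ) : qp q a 0 = 1 := by simp [qp]

lemma qp_succ (a : ℂ) (n : ℕ) : qp q a (n + 1) = qp q a n * (1 - a * q ^ n) :=
  prod_range_succ _ _

lemma qp_succ' (a : ℂ) (n : ℕ) : qp q a (n + 1) = (1 - a) * qp q (a * q) n := by
  simp only [qp, prod_range_succ', pow_succ', pow_zero, mul_one, mul_assoc]
  ring

lemma qp_add (a : ℂ) (m n : ℕ) : qp q a (m + n) = qp q a m * qp q (a * q ^ m) n := by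
  simp only [qp, prod_range_add, pow_add, mul_assoc]

lemma qp_self_succ (n : ℕ) : qp q q (n + 1) = qp q q n * (1 - q ^ (n + 1)) := by
  rw [qp_succ, pow_succ']

lemma qp_one_of_ne_zero {n : ℕ} (hn : n ≠ 0) : qp q 1 n = 0 := by
  obtain ⟨n, rfl⟩ := Nat.exists_eq_succ_of_ne_zero hn
  simp [qp_succ']

lemma qp_succ_sub_qp_mul_succ (b : ℂ) (n : ℕ) :
    qp q b (n + 1) - qp q (q * b) (n + 1) = -(b * (1 - q ^ (n + 1)) * qp q (q * b) n) := by
  rw [qp_succ', qp_succ, mul_comm b q]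
  ring

end QShiftedFactorial

section Nonvanishing

variable {q : ℂ}

lemma one_sub_mul_pow_ne_zero (hq : ‖q‖ ≤ 1) {a : ℂ} (ha : ‖a‖ < 1) (k : ℕ) :
    1 - a * q ^ k ≠ 0 := by
  refine sub_ne_zero.mpr fun h => ?_
  have : ‖a * q ^ k‖ < 1 := by
    rw [norm_mul, norm_pow]
    exact (mul_le_of_le_one_right (norm_nonneg a) (pow_le_one₀ (norm_nonneg q) hq)).trans_lt ha
  rw [← h, norm_one] at this
  exact this.false

lemma qp_ne_zero (hq : ‖q‖ ≤ 1) {a : ℂ} (ha : ‖a‖ < 1) (n : ℕ) : qp q a n ≠ 0 :=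
  prod_ne_zero_iff.mpr fun k _ => one_sub_mul_pow_ne_zero hq ha k

lemma qp_self_ne_zero (hq : ‖q‖ < 1) (n : ℕ) : qp q q n ≠ 0 :=
  qp_ne_zero hq.le hq n

lemma one_sub_pow_succ_ne_zero (hq : ‖q‖ < 1) (n : ℕ) : 1 - q ^ (n + 1) ≠ 0 := by
  have h := qp_self_ne_zero hq (n + 1)
  rw [qp_self_succ] at h
  exact right_ne_zero_of_mul h

end Nonvanishing

@[fun_prop]
lemma continuous_qp (q : ℂ) (n : ℕ) : Continuous fun a => qp q a n := by
  unfold qp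
  fun_prop

section Rigidity

variable {𝕜 E F : Type*} [NormedField 𝕜] [NormedAddCommGroup E] [NormedSpace 𝕜 E]
  [TopologicalSpace F] [T2Space F]

lemma apply_eq_apply_zero_of_smul_invariant {c : 𝕜} (hc : ‖c‖ < 1) {f : E → F}
    (hf : Continuous f) (hinv : ∀ z, f (c • z) = f z) (z : E) : f z = f 0 := by
  have hpow : ∀ N : ℕ, f (c ^ N • z) = f z := by
    intro N
    induction N with
    | zero => simp
    | succ N ih => rw [pow_succ', mul_smul, hinv, ih]
  have hlim : Tendsto (fun N : ℕ => c ^ N • z) atTop (𝓝 0) := by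
    simpa using (tendsto_pow_atTop_nhds_zero_of_norm_lt_one hc).smul_const z
  exact tendsto_nhds_unique (tendsto_const_nhds.congr fun N => (hpow N).symm)
    ((hf.tendsto 0).comp hlim)

lemma eq_zero_of_contiguity [Zero F] {c : 𝕜} (hc : ‖c‖ < 1) {D : ℕ → E → F}
    (hD : ∀ n, Continuous (D n)) (hD₀ : ∀ z, D 0 z = 0) (z₀ : E) (hz₀ : ∀ n, D n z₀ = 0)
    (hstep : ∀ n, (∀ z, D n z = 0) → ∀ z, D (n + 1) (c • z) = D (n + 1) z) (n : ℕ) (z : E) :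
    D n z = 0 := by
  induction n generalizing z with
  | zero => exact hD₀ z
  | succ n ih =>
    rw [apply_eq_apply_zero_of_smul_invariant hc (hD _) (hstep n ih),
      ← apply_eq_apply_zero_of_smul_invariant hc (hD _) (hstep n ih) z₀, hz₀]

end Rigidity

section QChuVandermonde

variable {q : ℂ}

/-- The case `c = 0` of the `q`-Chu–Vandermonde sum
`₂φ₁(q⁻ⁿ, b; c; q, q) = (c/b; q)_n bⁿ / (c; q)_n`. -/
noncomputable def qChuSum (q : ℂ) (n : ℕ) (b : ℂ) : ℂ :=
  ∑ k ∈ range (n + 1), qp q (q ^ n)⁻¹ k * qp q b k * q ^ k / qp q q k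

lemma continuous_qChuSum (q : ℂ) (n : ℕ) : Continuous (qChuSum q n) := by
  unfold qChuSum
  fun_prop

lemma qp_inv_pow_succ (hq₀ : q ≠ 0) (n k : ℕ) :
    qp q (q ^ (n + 1))⁻¹ (k + 1) = (1 - (q ^ (n + 1))⁻¹) * qp q (q ^ n)⁻¹ k := by
  rw [qp_succ', pow_succ, mul_inv, inv_mul_cancel_right₀ hq₀]

lemma qp_inv_pow_succ_mul (hq₀ : q ≠ 0) (n k : ℕ) :
    qp q (q ^ (n + 1))⁻¹ k * (q ^ k - q ^ (n + 1)) = (1 - q ^ (n + 1)) * qp q (q ^ n)⁻¹ k := by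
  have hinv : q ^ (n + 1) * (q ^ (n + 1))⁻¹ = 1 := mul_inv_cancel₀ (pow_ne_zero _ hq₀)
  have h := (qp_succ q _ k).symm.trans (qp_inv_pow_succ hq₀ n k)
  linear_combination (-q ^ (n + 1)) * h +
    (qp q (q ^ n)⁻¹ k - qp q (q ^ (n + 1))⁻¹ k * q ^ k) * hinv

lemma qChuSum_sub_qChuSum_mul (hq₀ : q ≠ 0) (hq : ‖q‖ < 1) (n : ℕ) (b : ℂ) :
    qChuSum q (n + 1) b - qChuSum q (n + 1) (q * b) =
      -(b * q * (1 - (q ^ (n + 1))⁻¹)) * qChuSum q n (q * b) := by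
  simp only [qChuSum, ← sum_sub_distrib, mul_sum]
  rw [sum_range_succ']
  simp only [qp_zero, sub_self, add_zero]
  refine sum_congr rfl fun j _ => ?_
  have hqj := qp_self_ne_zero hq j
  have hqj' := one_sub_pow_succ_ne_zero hq j
  have h := qp_succ_sub_qp_mul_succ q b j
  rw [qp_inv_pow_succ hq₀, qp_self_succ]
  generalize (q ^ (n + 1))⁻¹ = p, qp q (q ^ n)⁻¹ j = A, qp q b (j + 1) = P,
    qp q (q * b) (j + 1) = P', qp q (q * b) j = Q, 1 - q ^ (j + 1) = D at *
  field_simp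
  linear_combination (1 - p) * A * q ^ (j + 1) * h

lemma qChuSum_one (n : ℕ) : qChuSum q n 1 = 1 := by
  rw [qChuSum, sum_eq_single 0]
  · simp
  · intro k _ hk
    simp [qp_one_of_ne_zero q hk]
  · simp

lemma qChuSum_eq_pow (hq₀ : q ≠ 0) (hq : ‖q‖ < 1) (n : ℕ) (b : ℂ) : qChuSum q n b = b ^ n := by
  rw [← sub_eq_zero]
  refine eq_zero_of_contiguity (D := fun n b => qChuSum q n b - b ^ n) hq
    (fun n => (continuous_qChuSum q n).sub (continuous_pow n)) (by simp [qChuSum]) 1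
    (by simp [qChuSum_one]) (fun n ih b => ?_) n b
  have h := qChuSum_sub_qChuSum_mul hq₀ hq n b
  rw [sub_eq_zero.mp (ih (q * b))] at h
  have hinv : q ^ (n + 1) * (q ^ (n + 1))⁻¹ = 1 := mul_inv_cancel₀ (pow_ne_zero _ hq₀)
  rw [smul_eq_mul]
  linear_combination -h - b ^ (n + 1) * hinv

end QChuVandermonde

section FiniteIdentity

variable {q : ℂ}

/-- `tⁿ * productCoeff q u a n s` is the coefficient of `tⁿ` in the product of the `q`-binomial
series `∑ (a u⁻¹; q)_j (t u)ʲ / (q; q)_j` and `∑ (s u; q)_m (t u⁻¹)ᵐ / (q; q)_m`. -/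
noncomputable def productCoeff (q u a : ℂ) (n : ℕ) (s : ℂ) : ℂ :=
  ∑ j ∈ range (n + 1),
    qp q (a * u⁻¹) j * qp q (s * u) (n - j) * u ^ j * u⁻¹ ^ (n - j) /
      (qp q q j * qp q q (n - j))

/-- For `u = e^{iθ}` this is `(a s; q)_n p_n(cos θ; a, s)`, written without the division by
`(a s; q)_k`. -/
noncomputable def ascSum (q u a : ℂ) (n : ℕ) (s : ℂ) : ℂ :=
  ∑ k ∈ range (n + 1),
    qp q (q ^ n)⁻¹ k * qp q (a * u) k * qp q (a * u⁻¹) k * q ^ k *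
      qp q (a * s * q ^ k) (n - k) / qp q q k

lemma continuous_productCoeff (q u a : ℂ) (n : ℕ) : Continuous (productCoeff q u a n) := by
  unfold productCoeff
  fun_prop

lemma continuous_ascSum (q u a : ℂ) (n : ℕ) : Continuous (ascSum q u a n) := by
  unfold ascSum
  fun_prop

lemma productCoeff_sub_productCoeff_mul (hq : ‖q‖ < 1) {u : ℂ} (hu : u ≠ 0) (a : ℂ) (n : ℕ)
    (s : ℂ) :
    productCoeff q u a (n + 1) s - productCoeff q u a (n + 1) (q * s) =
      -s * productCoeff q u a n (q * s) := by
  simp only [productCoeff, ← sum_sub_distrib, mul_sum]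
  rw [sum_range_succ]
  simp only [Nat.sub_self, qp_zero, sub_self, add_zero]
  refine sum_congr rfl fun j hj => ?_
  have hm : n + 1 - j = n - j + 1 := by have := mem_range.mp hj; omega
  have h := qp_succ_sub_qp_mul_succ q (s * u) (n - j)
  rw [← mul_assoc q s u] at h
  have hqj := qp_self_ne_zero hq j
  have hqm := qp_self_ne_zero hq (n - j)
  have hqm' := one_sub_pow_succ_ne_zero hq (n - j)
  rw [hm, qp_self_succ]
  generalize qp q (a * u⁻¹) j = A, qp q (s * u) (n - j + 1) = P, qp q (q * s * u) (n - j + 1) = P',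
    qp q (q * s * u) (n - j) = Q, 1 - q ^ (n - j + 1) = D at *
  have key : (P - P') * (u⁻¹ ^ (n - j + 1) / D) = -s * Q * u⁻¹ ^ (n - j) := by
    rw [h, pow_succ u⁻¹]
    field_simp
  linear_combination A * u ^ j / (qp q q j * qp q q (n - j)) * key

lemma ascSum_sub_ascSum_mul (hq₀ : q ≠ 0) (u a : ℂ) (n : ℕ) (s : ℂ) :
    ascSum q u a (n + 1) s - ascSum q u a (n + 1) (q * s) =
      -(s * (1 - q ^ (n + 1)) * a) * ascSum q u a n (q * s) := by
  simp only [ascSum, ← sum_sub_distrib, mul_sum]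
  rw [sum_range_succ]
  simp only [Nat.sub_self, qp_zero, sub_self, add_zero]
  refine sum_congr rfl fun k hk => ?_
  have hkn := mem_range.mp hk
  have h := qp_succ_sub_qp_mul_succ q (a * s * q ^ k) (n - k)
  rw [show q * (a * s * q ^ k) = a * (q * s) * q ^ k by ring] at h
  have hA := qp_inv_pow_succ_mul hq₀ n k
  have hpow : q ^ k * (1 - q ^ (n - k + 1)) = q ^ k - q ^ (n + 1) := by
    rw [mul_sub, mul_one, ← pow_add]
    congr 2
    omega
  rw [show n + 1 - k = n - k + 1 by omega]
  generalize qp q (q ^ (n + 1))⁻¹ k = A, qp q (q ^ n)⁻¹ k = A',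
    qp q (a * u) k = B, qp q (a * u⁻¹) k = C, qp q (a * s * q ^ k) (n - k + 1) = P,
    qp q (a * (q * s) * q ^ k) (n - k + 1) = P', qp q (a * (q * s) * q ^ k) (n - k) = Q at *
  linear_combination (A * B * C * q ^ k / qp q q k) * h -
    (a * s * A * B * C * q ^ k * Q / qp q q k) * hpow - (a * s * B * C * q ^ k * Q / qp q q k) * hA

lemma productCoeff_apply_inv {u : ℂ} (hu : u ≠ 0) (a : ℂ) (n : ℕ) :
    productCoeff q u a n u⁻¹ = qp q (a * u⁻¹) n * u ^ n / qp q q n := by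
  rw [productCoeff, sum_eq_single_of_mem n (self_mem_range_succ n)]
  · simp
  · intro j hj hjn
    rw [inv_mul_cancel₀ hu, qp_one_of_ne_zero q (by have := mem_range.mp hj; omega)]
    simp

lemma ascSum_apply_inv (hq₀ : q ≠ 0) (hq : ‖q‖ < 1) (u a : ℂ) (n : ℕ) :
    ascSum q u a n u⁻¹ = qp q (a * u⁻¹) n * (a * u) ^ n := by
  rw [ascSum, ← qChuSum_eq_pow hq₀ hq n (a * u), qChuSum, mul_sum]
  refine sum_congr rfl fun k hk => ?_
  rw [← Nat.add_sub_cancel' (mem_range_succ_iff.mp hk), qp_add, Nat.add_sub_cancel_left]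
  ring

lemma productCoeff_eq_ascSum (hq₀ : q ≠ 0) (hq : ‖q‖ < 1) {u a : ℂ} (hu : u ≠ 0) (ha : a ≠ 0)
    (n : ℕ) (s : ℂ) : productCoeff q u a n s = ascSum q u a n s / (qp q q n * a ^ n) := by
  rw [← sub_eq_zero]
  refine eq_zero_of_contiguity
    (D := fun n s => productCoeff q u a n s - ascSum q u a n s / (qp q q n * a ^ n)) hq
    (fun n => (continuous_productCoeff q u a n).sub ((continuous_ascSum q u a n).div_const _))
    (by simp [productCoeff, ascSum]) u⁻¹ (fun n => ?_) (fun n ih s => ?_) n s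
  · rw [productCoeff_apply_inv hu, ascSum_apply_inv hq₀ hq, mul_pow]
    field_simp [qp_self_ne_zero hq n]
    ring
  · have hL := productCoeff_sub_productCoeff_mul hq hu a n s
    have hR : (ascSum q u a (n + 1) s - ascSum q u a (n + 1) (q * s)) /
        (qp q q (n + 1) * a ^ (n + 1)) = -s * (ascSum q u a n (q * s) / (qp q q n * a ^ n)) := by
      rw [ascSum_sub_ascSum_mul hq₀ u a n s, qp_self_succ]
      field_simp [qp_self_ne_zero hq n, one_sub_pow_succ_ne_zero hq n]
      ring
    rw [smul_eq_mul]
    linear_combination -hL + hR + s * ih (q * s)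

end FiniteIdentity

section QBinomial

variable {q : ℂ}

noncomputable def qBinomialSeries (q a z : ℂ) : ℂ := ∑' n, qp q a n * z ^ n / qp q q n

lemma qBinomial_term_succ (hq : ‖q‖ < 1) (a z : ℂ) (n : ℕ) :
    qp q a (n + 1) * z ^ (n + 1) / qp q q (n + 1) =
      qp q a n * z ^ n / qp q q n * ((1 - a * q ^ n) * z / (1 - q ^ (n + 1))) := by
  rw [qp_succ, qp_self_succ, pow_succ]
  field_simp [qp_self_ne_zero hq n, one_sub_pow_succ_ne_zero hq n]

lemma summable_norm_qBinomial (hq : ‖q‖ < 1) (a : ℂ) {z : ℂ} (hz : ‖z‖ < 1) :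
    Summable fun n => ‖qp q a n * z ^ n / qp q q n‖ := by
  obtain ⟨r, hzr, hr⟩ := exists_between hz
  have hqn : Tendsto (fun n : ℕ => q ^ n) atTop (𝓝 0) :=
    tendsto_pow_atTop_nhds_zero_of_norm_lt_one hq
  have hratio : Tendsto (fun n : ℕ => (1 - a * q ^ n) * z / (1 - q ^ (n + 1))) atTop (𝓝 z) := by
    have h := (((tendsto_const_nhds (x := (1 : ℂ))).sub (hqn.const_mul a)).mul_const z).div
      ((tendsto_const_nhds (x := (1 : ℂ))).sub (hqn.comp (tendsto_add_atTop_nat 1)))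
      (by norm_num : (1 : ℂ) - 0 ≠ 0)
    simpa [Pi.div_def] using h
  refine summable_of_ratio_norm_eventually_le hr ?_
  filter_upwards [hratio.norm.eventually_lt_const hzr] with n hn
  rw [norm_norm, norm_norm, qBinomial_term_succ hq, norm_mul, mul_comm r]
  exact mul_le_mul_of_nonneg_left hn.le (norm_nonneg _)

lemma qBinomialSeries_functional_eq (hq : ‖q‖ < 1) (a : ℂ) {z : ℂ} (hz : ‖z‖ < 1) :
    (1 - z) * qBinomialSeries q a z = (1 - a * z) * qBinomialSeries q a (q * z) := by
  have hqz : ‖q * z‖ < 1 := by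
    rw [norm_mul]; exact (mul_le_of_le_one_left (norm_nonneg z) hq.le).trans_lt hz
  have hS := (summable_norm_qBinomial hq a hz).of_norm
  have hS' := (summable_norm_qBinomial hq a hqz).of_norm
  have hdiff := hS.sub hS'
  suffices qBinomialSeries q a z - qBinomialSeries q a (q * z) =
      z * qBinomialSeries q a z - a * z * qBinomialSeries q a (q * z) by
    linear_combination this
  rw [qBinomialSeries, qBinomialSeries, ← hS.tsum_sub hS', hdiff.tsum_eq_zero_add, ← tsum_mul_left,
    ← tsum_mul_left, ← (hS.mul_left z).tsum_sub (hS'.mul_left (a * z))]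
  simp only [qp_zero, pow_zero, sub_self, zero_add]
  congr 1 with n
  rw [qBinomial_term_succ hq, qBinomial_term_succ hq]
  field_simp [one_sub_pow_succ_ne_zero hq n, qp_self_ne_zero hq n]
  ring

lemma tendsto_qBinomialSeries_pow_mul (hq : ‖q‖ < 1) (a : ℂ) {z : ℂ} (hz : ‖z‖ < 1) :
    Tendsto (fun N : ℕ => qBinomialSeries q a (q ^ N * z)) atTop (𝓝 1) := by
  have hqN : Tendsto (fun N : ℕ => q ^ N * z) atTop (𝓝 0) := by
    simpa using (tendsto_pow_atTop_nhds_zero_of_norm_lt_one hq).mul_const z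
  have hlim := tendsto_tsum_of_dominated_convergence (summable_norm_qBinomial hq a hz)
    (fun k => ((hqN.pow k).const_mul (qp q a k)).div_const (qp q q k)) (Eventually.of_forall
      fun N k => ?_)
  · rw [tsum_eq_single 0 fun k hk => by simp [hk]] at hlim
    simpa [qBinomialSeries] using hlim
  · have hle : ‖q ^ N * z‖ ≤ ‖z‖ := by
      rw [norm_mul, norm_pow]
      exact mul_le_of_le_one_left (norm_nonneg z) (pow_le_one₀ (norm_nonneg q) hq.le)
    simp only [norm_div, norm_mul, norm_pow] at hle ⊢
    gcongr

lemma summable_norm_mul_pow (hq : ‖q‖ < 1) (w : ℂ) : Summable fun k : ℕ => ‖-(w * q ^ k)‖ := by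
  simpa [norm_mul, norm_pow] using (summable_geometric_of_lt_one (norm_nonneg q) hq).mul_left ‖w‖

lemma tendsto_qp_qpi (hq : ‖q‖ < 1) (w : ℂ) : Tendsto (fun N => qp q w N) atTop (𝓝 (qpi q w)) := by
  have h := (multipliable_one_add_of_summable (summable_norm_mul_pow hq w)).hasProd.tendsto_prod_nat
  simpa only [← sub_eq_add_neg, qp, qpi] using h

lemma qpi_ne_zero (hq : ‖q‖ < 1) {w : ℂ} (hw : ‖w‖ < 1) : qpi q w ≠ 0 := by
  have h := tprod_one_add_ne_zero_of_summable
    (fun k => by rw [← sub_eq_add_neg]; exact one_sub_mul_pow_ne_zero hq.le hw k)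
    (summable_norm_mul_pow hq w)
  simpa only [← sub_eq_add_neg, qpi] using h

lemma qBinomialSeries_mul_qp (hq : ‖q‖ < 1) (a : ℂ) {z : ℂ} (hz : ‖z‖ < 1) (N : ℕ) :
    qBinomialSeries q a z * qp q z N = qp q (a * z) N * qBinomialSeries q a (q ^ N * z) := by
  induction N with
  | zero => simp
  | succ N ih =>
    have hN : ‖q ^ N * z‖ < 1 := by
      rw [norm_mul, norm_pow]
      exact (mul_le_of_le_one_left (norm_nonneg z) (pow_le_one₀ (norm_nonneg q) hq.le)).trans_lt hz
    have h := qBinomialSeries_functional_eq hq a hN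
    rw [← mul_assoc q, ← pow_succ'] at h
    rw [qp_succ, qp_succ, ← mul_assoc, ih]
    linear_combination qp q (a * z) N * h

theorem hasSum_qBinomial (hq : ‖q‖ < 1) (a : ℂ) {z : ℂ} (hz : ‖z‖ < 1) :
    HasSum (fun n => qp q a n * z ^ n / qp q q n) (qpi q (a * z) / qpi q z) := by
  suffices qBinomialSeries q a z * qpi q z = qpi q (a * z) by
    rw [← this, mul_div_cancel_right₀ _ (qpi_ne_zero hq hz)]
    exact (summable_norm_qBinomial hq a hz).of_norm.hasSum
  refine tendsto_nhds_unique ((tendsto_qp_qpi hq z).const_mul _) ?_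
  simpa [qBinomialSeries_mul_qp hq a hz] using
    (tendsto_qp_qpi hq (a * z)).mul (tendsto_qBinomialSeries_pow_mul hq a hz)

end QBinomial

section GeneratingFunction

variable {q : ℂ}

lemma sum_range_qBinomial_mul_qBinomial (u a s t : ℂ) (n : ℕ) :
    ∑ k ∈ range (n + 1), qp q (a * u⁻¹) k * (t * u) ^ k / qp q q k *
      (qp q (s * u) (n - k) * (t * u⁻¹) ^ (n - k) / qp q q (n - k)) =
      t ^ n * productCoeff q u a n s := by
  rw [productCoeff, mul_sum]
  refine sum_congr rfl fun k hk => ?_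
  obtain ⟨m, rfl⟩ := Nat.exists_eq_add_of_le (mem_range_succ_iff.mp hk)
  rw [Nat.add_sub_cancel_left, pow_add]
  ring

lemma ascSum_exp_mul_I {a s : ℂ} (has : ∀ k, qp q (a * s) k ≠ 0) (θ : ℝ) (n : ℕ) :
    ascSum q (exp (θ * I)) a n s = qp q (a * s) n * ascP q a s n θ := by
  rw [ascSum, ascP, mul_sum, exp_neg, zpow_neg, zpow_natCast]
  refine sum_congr rfl fun k hk => ?_
  obtain ⟨m, rfl⟩ := Nat.exists_eq_add_of_le (mem_range_succ_iff.mp hk)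
  rw [Nat.add_sub_cancel_left, qp_add]
  field_simp [has k]

end GeneratingFunction

/-- The generating function (2.15) for the Al-Salam--Chihara polynomials. -/
theorem stmt5 (q t₁ t₂ : ℝ) (hq₁ : 0 < q) (hq₂ : q < 1)
    (ht₁ : t₁ ∈ Set.Ioo (-1 : ℝ) 1) (ht₂ : t₂ ∈ Set.Ioo (-1 : ℝ) 1)
    (ht₁0 : t₁ ≠ 0) (θ : ℝ) (t : ℂ) (ht : ‖t‖ < 1) :
    HasSum
      (fun n : ℕ =>
        qp q (t₁ * t₂) n * ascP q t₁ t₂ n θ * (t / t₁) ^ n / qp q q n)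
      ((qpi q (t * t₁) * qpi q (t * t₂)) /
        (qpi q (t * Complex.exp (θ * Complex.I)) *
          qpi q (t * Complex.exp (-(θ * Complex.I))))) := by
  set u := exp (θ * I)
  have hu : ‖u‖ = 1 := norm_exp_ofReal_mul_I θ
  have hu0 : u ≠ 0 := exp_ne_zero _
  have hq : ‖(q : ℂ)‖ < 1 := by rwa [norm_real, Real.norm_of_nonneg hq₁.le]
  have hq₀ : (q : ℂ) ≠ 0 := ofReal_ne_zero.mpr hq₁.ne'
  have ht₁t₂ : ‖(t₁ : ℂ) * t₂‖ < 1 := by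
    rw [← ofReal_mul, norm_real, Real.norm_eq_abs, abs_mul]
    exact mul_lt_one_of_nonneg_of_lt_one_left (abs_nonneg _) (abs_lt.mpr ht₁) (abs_lt.mpr ht₂).le
  have htu : ‖t * u‖ < 1 := by rwa [norm_mul, hu, mul_one]
  have htu' : ‖t * u⁻¹‖ < 1 := by rwa [norm_mul, norm_inv, hu, inv_one, mul_one]
  have hprod := hasSum_sum_range_mul_of_summable_norm (summable_norm_qBinomial hq (t₁ * u⁻¹) htu)
    (summable_norm_qBinomial hq (t₂ * u) htu')
  rw [(hasSum_qBinomial hq _ htu).tsum_eq, (hasSum_qBinomial hq _ htu').tsum_eq] at hprod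
  have e₁ : (t₁ : ℂ) * u⁻¹ * (t * u) = t * t₁ := by field_simp
  have e₂ : (t₂ : ℂ) * u * (t * u⁻¹) = t * t₂ := by field_simp
  rw [e₁, e₂, div_mul_div_comm] at hprod
  rw [exp_neg]
  refine hprod.congr_fun fun n => ?_
  rw [sum_range_qBinomial_mul_qBinomial,
    productCoeff_eq_ascSum hq₀ hq hu0 (ofReal_ne_zero.mpr ht₁0),
    ascSum_exp_mul_I (qp_ne_zero hq.le ht₁t₂)]
  field_simp [qp_self_ne_zero hq n]
  ring
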